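/- arXiv:0811.3705 — 4 statements merged into one kernel-verified Lean document; each statement's English description precedes it below -/
import Mathlib

section
/- For every signed finite measure Q on (X,B) that is absolutely continuous with respect to P and every measurable function f : X → ℝ such that ∫ |f| d|Q| < ∞ and x ↦ φ*(f(x)) is P-integrable, one has ∫ f dQ − ∫ φ*(f) dP ≤ D_φ(Q,P). -/
/- STATEMENT 1: With P a probability measure and φ : ℝ → [0,∞] a proper closed convex
function with φ(1) = 0 whose domain is an interval with endpoints a_φ < 1 < b_φ, let
φ*(t) := sup_{x∈ℝ} (t·x − φ(x)) be the convex conjugate.  For every signed finite measure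
Q ≪ P and every measurable f : X → ℝ with ∫|f| d|Q| < ∞ and x ↦ φ*(f(x)) P-integrable
(i.e. it coincides with an integrable real-valued function g), one has
∫ f dQ − ∫ φ*(f) dP ≤ D_φ(Q,P)  where  ∫ f dQ = ∫ f·(dQ/dP) dP. -/

open MeasureTheory Set
open scoped ENNReal NNReal

noncomputable def conjFn (φ : ℝ → ℝ≥0∞) (t : ℝ) : EReal :=
  ⨆ x : ℝ, ((t * x : ℝ) : EReal) - (φ x : EReal)

/-! With `r = dQ/dP`, the Fenchel–Young inequality `f r - φ*(f) ≤ φ(r)` holds pointwise by the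
definition of `φ*`; integrating it against `P` gives the bound. The left side is a genuine
integral because `|Q| = |r| P`, so `∫ |f| d|Q| < ∞` makes `f r` integrable against `P`. -/

theorem le_conjFn (φ : ℝ → ℝ≥0∞) (t x : ℝ) :
    ((t * x : ℝ) : EReal) - (φ x : EReal) ≤ conjFn φ t :=
  le_iSup (fun y : ℝ => ((t * y : ℝ) : EReal) - (φ y : EReal)) x

theorem ofReal_mul_sub_le_of_conjFn_le (φ : ℝ → ℝ≥0∞) {t x c : ℝ} (hc : conjFn φ t ≤ c) :
    ENNReal.ofReal (t * x - c) ≤ φ x := by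
  rcases eq_top_or_lt_top (φ x) with hφ | hφ
  · simp [hφ]
  lift φ x to ℝ≥0 using hφ.ne with a ha
  have hle : ((t * x : ℝ) : EReal) - (a : ℝ) ≤ c := by
    simpa [← ha, EReal.coe_nnreal_eq_coe_real] using (le_conjFn φ t x).trans hc
  rw [← EReal.coe_sub, EReal.coe_le_coe_iff] at hle
  simpa using ENNReal.ofReal_le_ofReal (show t * x - c ≤ a by linarith)

theorem ENNReal.ofReal_add_ofReal_neg (r : ℝ) :
    ENNReal.ofReal r + ENNReal.ofReal (-r) = ‖r‖ₑ := by
  rw [Real.enorm_eq_ofReal_abs]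
  rcases le_total 0 r with h | h
  · simp [h, abs_of_nonneg h]
  · simp [h, abs_of_nonpos h]

theorem MeasureTheory.ofReal_integral_le_lintegral_ofReal {α : Type*} [MeasurableSpace α]
    {μ : Measure α} (f : α → ℝ) :
    ENNReal.ofReal (∫ x, f x ∂μ) ≤ ∫⁻ x, ENNReal.ofReal (f x) ∂μ := by
  by_cases hf : Integrable f μ
  · rw [integral_eq_lintegral_pos_part_sub_lintegral_neg_part hf]
    calc ENNReal.ofReal ((∫⁻ x, ENNReal.ofReal (f x) ∂μ).toReal - _)
        ≤ ENNReal.ofReal (∫⁻ x, ENNReal.ofReal (f x) ∂μ).toReal :=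
          ENNReal.ofReal_le_ofReal (sub_le_self _ ENNReal.toReal_nonneg)
      _ ≤ ∫⁻ x, ENNReal.ofReal (f x) ∂μ := ENNReal.ofReal_toReal_le
  · simp [integral_undef hf]

namespace MeasureTheory.SignedMeasure

variable {α : Type*} [MeasurableSpace α] {s : SignedMeasure α} {μ : Measure α} [SigmaFinite μ]

theorem totalVariation_eq_withDensity_enorm_rnDeriv
    (hsμ : s ≪ᵥ μ.toENNRealVectorMeasure) :
    s.totalVariation = μ.withDensity fun x => ‖s.rnDeriv μ x‖ₑ := by
  have hs : s = 0 + μ.withDensityᵥ (s.rnDeriv μ) := by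
    rw [zero_add, (absolutelyContinuous_iff_withDensityᵥ_rnDeriv_eq s μ).mp hsμ]
  rw [totalVariation, toJordanDecomposition_eq_of_eq_add_withDensity (measurable_rnDeriv s μ)
    (integrable_rnDeriv s μ) VectorMeasure.MutuallySingular.zero_left hs]
  simp only [toJordanDecomposition_zero, JordanDecomposition.zero_posPart,
    JordanDecomposition.zero_negPart, zero_add]
  rw [← withDensity_add_left (measurable_rnDeriv s μ).ennreal_ofReal]
  congr 1
  funext x
  exact ENNReal.ofReal_add_ofReal_neg _

theorem integrable_mul_rnDeriv_of_integrable_totalVariation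
    (hsμ : s ≪ᵥ μ.toENNRealVectorMeasure) {f : α → ℝ} (hfm : AEStronglyMeasurable f μ)
    (hf : Integrable f s.totalVariation) :
    Integrable (fun x => f x * s.rnDeriv μ x) μ := by
  rw [totalVariation_eq_withDensity_enorm_rnDeriv hsμ, integrable_withDensity_iff
    (measurable_rnDeriv s μ).enorm (ae_of_all _ fun _ => enorm_lt_top)] at hf
  refine hf.mono (hfm.mul (measurable_rnDeriv s μ).aestronglyMeasurable) (ae_of_all _ fun x => ?_)
  simp

end MeasureTheory.SignedMeasure

theorem dual_lower_bound_general
    {X : Type*} [MeasurableSpace X] (P : Measure X) [IsProbabilityMeasure P]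
    (φ : ℝ → ℝ≥0∞)
    -- Q is a signed finite measure absolutely continuous w.r.t. P
    (Q : SignedMeasure X)
    (hQP : MeasureTheory.VectorMeasure.AbsolutelyContinuous Q P.toENNRealVectorMeasure)
    -- f is measurable with ∫ |f| d|Q| < ∞
    (f : X → ℝ) (hf_meas : Measurable f)
    (hf_int : Integrable f Q.totalVariation)
    -- x ↦ φ*(f(x)) is P-integrable, with integrable real representative g
    (g : X → ℝ) (hg_int : Integrable g P)
    (hg_repr : ∀ᵐ x ∂P, (g x : EReal) = conjFn φ (f x)) :
    ENNReal.ofReal ((∫ x, f x * Q.rnDeriv P x ∂P) - ∫ x, g x ∂P)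
      ≤ ∫⁻ x, φ (Q.rnDeriv P x) ∂P := by
  have hfQ : Integrable (fun x => f x * Q.rnDeriv P x) P :=
    SignedMeasure.integrable_mul_rnDeriv_of_integrable_totalVariation hQP
      hf_meas.aestronglyMeasurable hf_int
  have fenchel_young :
      ∀ᵐ x ∂P, ENNReal.ofReal (f x * Q.rnDeriv P x - g x) ≤ φ (Q.rnDeriv P x) := by
    filter_upwards [hg_repr] with x hx
    exact ofReal_mul_sub_le_of_conjFn_le φ hx.ge
  calc ENNReal.ofReal ((∫ x, f x * Q.rnDeriv P x ∂P) - ∫ x, g x ∂P)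
      = ENNReal.ofReal (∫ x, f x * Q.rnDeriv P x - g x ∂P) := by rw [integral_sub hfQ hg_int]
    _ ≤ ∫⁻ x, ENNReal.ofReal (f x * Q.rnDeriv P x - g x) ∂P :=
      ofReal_integral_le_lintegral_ofReal _
    _ ≤ ∫⁻ x, φ (Q.rnDeriv P x) ∂P := lintegral_mono_ae fenchel_young

theorem dual_lower_bound
    {X : Type*} [MeasurableSpace X] (P : Measure X) [IsProbabilityMeasure P]
    (φ : ℝ → ℝ≥0∞)
    -- φ is convex
    (hconv : ∀ x y : ℝ, ∀ t : ℝ, 0 ≤ t → t ≤ 1 →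
      φ (t * x + (1 - t) * y) ≤ ENNReal.ofReal t * φ x + ENNReal.ofReal (1 - t) * φ y)
    -- φ(1) = 0
    (hone : φ 1 = 0)
    -- φ is closed (lower semicontinuous)
    (hlsc : LowerSemicontinuous φ)
    -- the domain is an interval with endpoints a_φ < 1 < b_φ
    (hdom : Set.OrdConnected {x : ℝ | φ x ≠ ∞})
    (hmem : (1 : ℝ) ∈ interior {x : ℝ | φ x ≠ ∞})
    -- Q is a signed finite measure absolutely continuous w.r.t. P
    (Q : SignedMeasure X)
    (hQP : MeasureTheory.VectorMeasure.AbsolutelyContinuous Q P.toENNRealVectorMeasure)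
    -- f is measurable with ∫ |f| d|Q| < ∞
    (f : X → ℝ) (hf_meas : Measurable f)
    (hf_int : Integrable f Q.totalVariation)
    -- x ↦ φ*(f(x)) is P-integrable, with integrable real representative g
    (g : X → ℝ) (hg_int : Integrable g P)
    (hg_repr : ∀ᵐ x ∂P, (g x : EReal) = conjFn φ (f x)) :
    ENNReal.ofReal ((∫ x, f x * Q.rnDeriv P x ∂P) - ∫ x, g x ∂P)
      ≤ ∫⁻ x, φ (Q.rnDeriv P x) ∂P :=
  dual_lower_bound_general P φ Q hQP f hf_meas hf_int g hg_int hg_repr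
end

section
/- Under the hypotheses of the dual representation theorem (φ differentiable, Q absolutely continuous with respect to P with ∫ |f| d|Q| < ∞ for all f ∈ F, D_φ(Q,P) finite, and φ'(dQ/dP) ∈ F), if in addition φ is essentially smooth, then f := φ'(dQ/dP) is the unique (up to P-almost everywhere equality) function in F achieving the supremum in D_φ(Q,P) = sup_{f∈F} { ∫ f dQ − ∫ φ*(f) dP }. -/
/-! With `r = dQ/dP`, the Fenchel–Young gap `φ*(f) - (f r - φ(r))` is nonnegative, and
optimality of `f` says exactly that its `P`-integral vanishes; so it vanishes `P`-a.e., i.e.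
`f x` is a subgradient of `φ` at `r x` for a.e. `x`. At an interior point of the domain the only
subgradient of the differentiable `φ` is `φ'`. At a finite endpoint there is none: a subgradient
bounds the slopes of `φ` from that endpoint, hence `φ'` on one side of it, while essential
smoothness makes `φ'` unbounded there. -/

open MeasureTheory Set Filter Topology
open scoped ENNReal NNReal

lemma convexOn_toReal_of_ennreal_convex {φ : ℝ → ℝ≥0∞}
    (hconv : ∀ x y : ℝ, ∀ t : ℝ, 0 ≤ t → t ≤ 1 →
      φ (t * x + (1 - t) * y) ≤ ENNReal.ofReal t * φ x + ENNReal.ofReal (1 - t) * φ y)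
    (hdom : OrdConnected {x : ℝ | φ x ≠ ∞}) :
    ConvexOn ℝ {x : ℝ | φ x ≠ ∞} fun x => (φ x).toReal := by
  refine ⟨convex_iff_ordConnected.mpr hdom,
    fun x (hx : φ x ≠ ∞) y (hy : φ y ≠ ∞) a b ha hb hab => ?_⟩
  obtain rfl : b = 1 - a := by linarith
  have hx' : ENNReal.ofReal a * φ x ≠ ∞ := ENNReal.mul_ne_top ENNReal.ofReal_ne_top hx
  have hy' : ENNReal.ofReal (1 - a) * φ y ≠ ∞ := ENNReal.mul_ne_top ENNReal.ofReal_ne_top hy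
  calc (φ (a • x + (1 - a) • y)).toReal
      ≤ (ENNReal.ofReal a * φ x + ENNReal.ofReal (1 - a) * φ y).toReal :=
        ENNReal.toReal_mono (ENNReal.add_ne_top.mpr ⟨hx', hy'⟩) (hconv x y a ha (by linarith))
    _ = a • (φ x).toReal + (1 - a) • (φ y).toReal := by
        rw [ENNReal.toReal_add hx' hy', ENNReal.toReal_mul, ENNReal.toReal_mul,
          ENNReal.toReal_ofReal ha, ENNReal.toReal_ofReal hb, smul_eq_mul, smul_eq_mul]

section Subgradient

variable {ψ : ℝ → ℝ} {D : Set ℝ} {s t x d : ℝ}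

lemma eq_of_hasDerivAt_of_subgradient (hs : s ∈ interior D) (hd : HasDerivAt ψ d s)
    (hsub : ∀ y ∈ D, ψ s + t * (y - s) ≤ ψ y) : t = d := by
  have hmin : IsLocalMin (fun y => ψ y - t * (y - s)) s := by
    filter_upwards [isOpen_interior.mem_nhds hs] with y hy
    linarith [hsub y (interior_subset hy)]
  have := hmin.hasDerivAt_eq_zero (hd.sub ((hasDerivAt_id s).sub_const s |>.const_mul t))
  linarith

lemma ConvexOn.subgradient_le_of_hasDerivAt_of_lt (hψ : ConvexOn ℝ D ψ) (hs : s ∈ D)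
    (hx : x ∈ D) (hsx : s < x) (hd : HasDerivAt ψ d x)
    (hsub : ∀ y ∈ D, ψ s + t * (y - s) ≤ ψ y) : t ≤ d := by
  refine le_trans ?_ (hψ.slope_le_of_hasDerivAt hs hx hsx hd)
  rw [slope_def_field, le_div_iff₀ (sub_pos.mpr hsx)]
  linarith [hsub x hx]

lemma ConvexOn.hasDerivAt_le_subgradient_of_lt (hψ : ConvexOn ℝ D ψ) (hs : s ∈ D)
    (hx : x ∈ D) (hxs : x < s) (hd : HasDerivAt ψ d x)
    (hsub : ∀ y ∈ D, ψ s + t * (y - s) ≤ ψ y) : d ≤ t := by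
  refine (hψ.le_slope_of_hasDerivAt hx hs hxs hd).trans ?_
  rw [slope_def_field, div_le_iff₀ (sub_pos.mpr hxs)]
  linarith [hsub x hx]

lemma Set.OrdConnected.Ioo_subset_interior (hD : OrdConnected D) (hs : s ∈ D) (hx : x ∈ D) :
    Ioo s x ⊆ interior D :=
  interior_maximal (Ioo_subset_Icc_self.trans (hD.out hs hx)) isOpen_Ioo

lemma Set.OrdConnected.isGLB_of_notMem_interior (hD : OrdConnected D) (hs : s ∈ D)
    (hsD : s ∉ interior D) (hx : x ∈ D) (hsx : s < x) : IsGLB D s :=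
  ⟨fun _ hy => not_lt.mp fun hys => hsD (hD.Ioo_subset_interior hy hx ⟨hys, hsx⟩),
    fun _ hb => hb hs⟩

lemma Set.OrdConnected.isLUB_of_notMem_interior (hD : OrdConnected D) (hs : s ∈ D)
    (hsD : s ∉ interior D) (hx : x ∈ D) (hxs : x < s) : IsLUB D s :=
  ⟨fun _ hy => not_lt.mp fun hsy => hsD (hD.Ioo_subset_interior hx hy ⟨hxs, hsy⟩),
    fun _ hb => hb hs⟩

theorem ConvexOn.eq_of_subgradient_of_essentiallySmooth (hψ : ConvexOn ℝ D ψ)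
    {ψ' : ℝ → ℝ}
    (hderiv : ∀ x ∈ interior D, HasDerivAt ψ (ψ' x) x)
    (hleft : ∀ a, IsGLB D a → Tendsto ψ' (𝓝[>] a) atBot)
    (hright : ∀ b, IsLUB D b → Tendsto ψ' (𝓝[<] b) atTop)
    (hx : x ∈ interior D) (hs : s ∈ D) (hsub : ∀ y ∈ D, ψ s + t * (y - s) ≤ ψ y) :
    t = ψ' s := by
  by_cases hsD : s ∈ interior D
  · exact eq_of_hasDerivAt_of_subgradient hsD (hderiv s hsD) hsub
  have hD : OrdConnected D := hψ.1.ordConnected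
  exfalso
  rcases lt_or_gt_of_ne (ne_of_mem_of_not_mem hx hsD).symm with hsx | hxs
  · have hbelow : ∀ᶠ y in 𝓝[>] s, ψ' y < t ∧ y ∈ Ioo s x :=
      ((hleft s (hD.isGLB_of_notMem_interior hs hsD (interior_subset hx) hsx)).eventually
        (eventually_lt_atBot t)).and (Ioo_mem_nhdsGT hsx)
    obtain ⟨y, hyt, hy⟩ := hbelow.exists
    have hyD := hD.Ioo_subset_interior hs (interior_subset hx) hy
    exact hyt.not_ge
      (hψ.subgradient_le_of_hasDerivAt_of_lt hs (interior_subset hyD) hy.1 (hderiv y hyD) hsub)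
  · have habove : ∀ᶠ y in 𝓝[<] s, t < ψ' y ∧ y ∈ Ioo x s :=
      ((hright s (hD.isLUB_of_notMem_interior hs hsD (interior_subset hx) hxs)).eventually
        (eventually_gt_atTop t)).and (Ioo_mem_nhdsLT hxs)
    obtain ⟨y, hyt, hy⟩ := habove.exists
    have hyD := hD.Ioo_subset_interior (interior_subset hx) hs hy
    exact hyt.not_ge
      (hψ.hasDerivAt_le_subgradient_of_lt hs (interior_subset hyD) hy.2 (hderiv y hyD) hsub)

end Subgradient

namespace MeasureTheory.SignedMeasure

variable {X : Type*} [MeasurableSpace X] {s : SignedMeasure X} {μ : Measure X} [SigmaFinite μ]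

lemma totalVariation_eq_withDensity_rnDeriv (h : s ≪ᵥ μ.toENNRealVectorMeasure) :
    s.totalVariation = μ.withDensity (fun x => ENNReal.ofReal (s.rnDeriv μ x))
      + μ.withDensity fun x => ENNReal.ofReal (-s.rnDeriv μ x) := by
  rw [totalVariation, toJordanDecomposition_eq_of_eq_add_withDensity (measurable_rnDeriv s μ)
    (integrable_rnDeriv s μ) VectorMeasure.MutuallySingular.zero_left
    (by rw [zero_add, withDensityᵥ_rnDeriv_eq s μ h])]
  simp [toJordanDecomposition_zero]

lemma integrable_mul_rnDeriv (h : s ≪ᵥ μ.toENNRealVectorMeasure) {f : X → ℝ}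
    (hf : Integrable f s.totalVariation) : Integrable (fun x => f x * s.rnDeriv μ x) μ := by
  rw [totalVariation_eq_withDensity_rnDeriv h, integrable_add_measure] at hf
  have hr := measurable_rnDeriv s μ
  have hpos := (integrable_withDensity_iff hr.ennreal_ofReal
    (ae_of_all _ fun _ => ENNReal.ofReal_lt_top)).mp hf.1
  have hneg := (integrable_withDensity_iff hr.neg.ennreal_ofReal
    (ae_of_all _ fun _ => ENNReal.ofReal_lt_top)).mp hf.2
  refine (hpos.sub hneg).congr (ae_of_all _ fun x => ?_)
  simp only [Pi.sub_apply, Pi.neg_apply, ENNReal.toReal_ofReal', ← mul_sub,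
    max_zero_sub_max_neg_zero_eq_self]

end MeasureTheory.SignedMeasure

lemma mul_sub_toReal_le_of_coe_eq_conjFn {φ : ℝ → ℝ≥0∞} {c t y : ℝ}
    (hc : (c : EReal) = conjFn φ t) (hy : φ y ≠ ∞) : t * y - (φ y).toReal ≤ c := by
  have hle : ((t * y : ℝ) : EReal) - (φ y : EReal) ≤ conjFn φ t :=
    le_iSup (fun z : ℝ => ((t * z : ℝ) : EReal) - (φ z : EReal)) y
  rwa [← hc, ← EReal.coe_ennreal_toReal hy, ← EReal.coe_sub, EReal.coe_le_coe_iff] at hle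

theorem dual_optimal_solution_unique_general
    {X : Type*} [MeasurableSpace X] (P : Measure X) [IsProbabilityMeasure P]
    (φ : ℝ → ℝ≥0∞)
    -- φ is convex
    (hconv : ∀ x y : ℝ, ∀ t : ℝ, 0 ≤ t → t ≤ 1 →
      φ (t * x + (1 - t) * y) ≤ ENNReal.ofReal t * φ x + ENNReal.ofReal (1 - t) * φ y)
    -- φ is closed (lower semicontinuous)
    (hlsc : LowerSemicontinuous φ)
    -- the domain is an interval with endpoints a_φ < 1 < b_φ
    (hdom : Set.OrdConnected {x : ℝ | φ x ≠ ∞})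
    (hmem : (1 : ℝ) ∈ interior {x : ℝ | φ x ≠ ∞})
    -- φ is differentiable on the interior of its domain, with derivative φ'
    (φ' : ℝ → ℝ)
    (hdiff : ∀ x ∈ interior {x : ℝ | φ x ≠ ∞},
      HasDerivAt (fun y => (φ y).toReal) (φ' x) x)
    -- φ is essentially smooth: φ' blows up at any finite endpoint of the domain
    (hes_left : ∀ a : ℝ, IsGLB {x : ℝ | φ x ≠ ∞} a → Tendsto φ' (𝓝[>] a) atBot)
    (hes_right : ∀ b : ℝ, IsLUB {x : ℝ | φ x ≠ ∞} b → Tendsto φ' (𝓝[<] b) atTop)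
    -- Q is a signed finite measure absolutely continuous w.r.t. P
    (Q : SignedMeasure X)
    (hQP : MeasureTheory.VectorMeasure.AbsolutelyContinuous Q P.toENNRealVectorMeasure)
    -- the class F of measurable functions, with ∫ |f| d|Q| < ∞ for all f ∈ F
    (F : Set (X → ℝ))
    (hF : ∀ f ∈ F, Measurable f ∧ Integrable f Q.totalVariation)
    -- D_φ(Q,P) is finite
    (hfin : ∫⁻ x, φ (Q.rnDeriv P x) ∂P ≠ ∞) :
    -- any f ∈ F achieving the supremum value D_φ(Q,P) equals φ'(dQ/dP) P-a.e.
    ∀ f ∈ F, ∀ g : X → ℝ, Integrable g P →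
      (∀ᵐ x ∂P, (g x : EReal) = conjFn φ (f x)) →
      (∫ x, f x * Q.rnDeriv P x ∂P) - (∫ x, g x ∂P)
        = (∫⁻ x, φ (Q.rnDeriv P x) ∂P).toReal →
      f =ᵐ[P] (fun x => φ' (Q.rnDeriv P x)) := by
  intro f hfF g hg hgconj hopt
  set r := Q.rnDeriv P
  have hφr : AEMeasurable (fun x => φ (r x)) P :=
    (hlsc.measurable.comp (SignedMeasure.measurable_rnDeriv Q P)).aemeasurable
  have hφr_fin : ∀ᵐ x ∂P, φ (r x) < ∞ := ae_lt_top' hφr hfin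
  have hfr : Integrable (fun x => f x * r x) P :=
    SignedMeasure.integrable_mul_rnDeriv hQP (hF f hfF).2
  have hφr_int : Integrable (fun x => (φ (r x)).toReal) P :=
    integrable_toReal_of_lintegral_ne_top hφr hfin
  have hfy_int : Integrable (fun x => f x * r x - (φ (r x)).toReal) P := hfr.sub hφr_int
  have hgap : (fun x => g x - (f x * r x - (φ (r x)).toReal)) =ᵐ[P] 0 := by
    have hnonneg : 0 ≤ᵐ[P] fun x => g x - (f x * r x - (φ (r x)).toReal) := by
      filter_upwards [hgconj, hφr_fin] with x hgx hx
      exact sub_nonneg.mpr (mul_sub_toReal_le_of_coe_eq_conjFn hgx hx.ne)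
    have hzero : ∫ x, g x - (f x * r x - (φ (r x)).toReal) ∂P = 0 := by
      rw [integral_sub hg hfy_int, integral_sub hfr hφr_int, integral_toReal hφr hφr_fin]
      linarith
    exact (integral_eq_zero_iff_of_nonneg_ae hnonneg (hg.sub hfy_int)).mp hzero
  filter_upwards [hgconj, hφr_fin, hgap] with x hgx hx hgapx
  refine (convexOn_toReal_of_ennreal_convex hconv hdom).eq_of_subgradient_of_essentiallySmooth
    hdiff hes_left hes_right hmem hx.ne fun y (hy : φ y ≠ ∞) => ?_
  have := mul_sub_toReal_le_of_coe_eq_conjFn hgx hy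
  simp only [Pi.zero_apply] at hgapx
  linarith

theorem dual_optimal_solution_unique
    {X : Type*} [MeasurableSpace X] (P : Measure X) [IsProbabilityMeasure P]
    (φ : ℝ → ℝ≥0∞)
    -- φ is convex
    (hconv : ∀ x y : ℝ, ∀ t : ℝ, 0 ≤ t → t ≤ 1 →
      φ (t * x + (1 - t) * y) ≤ ENNReal.ofReal t * φ x + ENNReal.ofReal (1 - t) * φ y)
    -- φ(1) = 0
    (hone : φ 1 = 0)
    -- φ is closed (lower semicontinuous)
    (hlsc : LowerSemicontinuous φ)
    -- the domain is an interval with endpoints a_φ < 1 < b_φ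
    (hdom : Set.OrdConnected {x : ℝ | φ x ≠ ∞})
    (hmem : (1 : ℝ) ∈ interior {x : ℝ | φ x ≠ ∞})
    -- φ is differentiable on the interior of its domain, with derivative φ'
    (φ' : ℝ → ℝ)
    (hdiff : ∀ x ∈ interior {x : ℝ | φ x ≠ ∞},
      HasDerivAt (fun y => (φ y).toReal) (φ' x) x)
    -- φ is essentially smooth: φ' blows up at any finite endpoint of the domain
    (hes_left : ∀ a : ℝ, IsGLB {x : ℝ | φ x ≠ ∞} a → Tendsto φ' (𝓝[>] a) atBot)
    (hes_right : ∀ b : ℝ, IsLUB {x : ℝ | φ x ≠ ∞} b → Tendsto φ' (𝓝[<] b) atTop)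
    -- Q is a signed finite measure absolutely continuous w.r.t. P
    (Q : SignedMeasure X)
    (hQP : MeasureTheory.VectorMeasure.AbsolutelyContinuous Q P.toENNRealVectorMeasure)
    -- the class F of measurable functions, with ∫ |f| d|Q| < ∞ for all f ∈ F
    (F : Set (X → ℝ))
    (hF : ∀ f ∈ F, Measurable f ∧ Integrable f Q.totalVariation)
    -- D_φ(Q,P) is finite
    (hfin : ∫⁻ x, φ (Q.rnDeriv P x) ∂P ≠ ∞)
    -- φ'(dQ/dP) belongs to F
    (hmemF : (fun x => φ' (Q.rnDeriv P x)) ∈ F) :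
    -- any f ∈ F achieving the supremum value D_φ(Q,P) equals φ'(dQ/dP) P-a.e.
    ∀ f ∈ F, ∀ g : X → ℝ, Integrable g P →
      (∀ᵐ x ∂P, (g x : EReal) = conjFn φ (f x)) →
      (∫ x, f x * Q.rnDeriv P x ∂P) - (∫ x, g x ∂P)
        = (∫⁻ x, φ (Q.rnDeriv P x) ∂P).toReal →
      f =ᵐ[P] (fun x => φ' (Q.rnDeriv P x)) :=
  dual_optimal_solution_unique_general P φ hconv hlsc hdom hmem φ' hdiff hes_left hes_right Q hQP F
    hF hfin
end

section
/- For every θ ∈ Θ one has D_φ(θ, θ_T) = sup_{α∈Θ} P_{θ_T} h(θ,α); moreover the supremum is attained at α = θ_T, and this maximizer is unique, independently of the value of θ. -/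
/-!
Write `t = p_θ / p_{θ_T}` and `s_α = p_θ / p_α`. The change of measure `dP_θ = t dP_{θ_T}` turns
`P_{θ_T} h(θ,α)` into the `P_{θ_T}`-integral of `φ(s_α) + φ'(s_α)(t - s_α)`, the tangent line of
`φ` at `s_α` evaluated at `t`. By strict convexity this lies below `φ(t)`, with equality exactly
where `s_α = t`, i.e. where `p_α = p_{θ_T}`; identifiability then forces `α = θ_T`.

Since the densities need not be measurable, the change of measure needs care. The ratio `t` is
still a.e. measurable, because `φ'(t)` and `t φ'(t) - φ(t)` are integrable and both `φ'` and
`a ↦ a φ'(a) - φ(a)` are injective on `(0, ∞)`; and over the σ-finite `λ` a density may be replaced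
by a measurable minorant defining the same measure.
-/

open MeasureTheory ProbabilityTheory Filter Topology Set
open scoped ENNReal NNReal

noncomputable section

/-- `h(θ,α,x) = P_θ f(θ,α) − g(θ,α,x)` from the paper. -/
def hFun {X : Type*} [MeasurableSpace X] {d : ℕ} (φ : ℝ → ℝ)
    (p : EuclideanSpace ℝ (Fin d) → X → ℝ) (P : EuclideanSpace ℝ (Fin d) → Measure X)
    (θ α : EuclideanSpace ℝ (Fin d)) (x : X) : ℝ :=
  (∫ y, deriv φ (p θ y / p α y) ∂(P θ))
    - ((p θ x / p α x) * deriv φ (p θ x / p α x) - φ (p θ x / p α x))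

namespace MeasureTheory

variable {X : Type*} [MeasurableSpace X]

theorem ae_withDensity_ne_zero (ν : Measure X) [SFinite ν] (f : X → ℝ≥0∞) :
    ∀ᵐ x ∂ν.withDensity f, f x ≠ 0 := by
  obtain ⟨g, hg, hgf, hgeq⟩ := exists_measurable_le_withDensity_eq ν f
  rw [← hgeq, ae_withDensity_iff hg]
  exact ae_of_all _ fun x hgx => (pos_iff_ne_zero.2 hgx |>.trans_le (hgf x)).ne'

theorem withDensity_mono_measure {μ ν : Measure X} (hμν : μ ≤ ν) (r : X → ℝ≥0∞) :
    μ.withDensity r ≤ ν.withDensity r :=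
  Measure.le_iff.2 fun s hs => by
    simpa only [withDensity_apply _ hs] using
      lintegral_mono' (Measure.restrict_mono subset_rfl hμν) le_rfl

theorem withDensity_withDensity_le {ν : Measure X} {f g r : X → ℝ≥0∞}
    [SFinite ν] (hr : Measurable r) (hfg : ∀ᵐ x ∂ν.withDensity f, r x * f x ≤ g x) :
    (ν.withDensity f).withDensity r ≤ ν.withDensity g := by
  obtain ⟨f₀, hf₀, hf₀f, hf₀eq⟩ := exists_measurable_le_withDensity_eq ν f
  rw [← hf₀eq, ae_withDensity_iff hf₀] at hfg
  rw [← hf₀eq, ← withDensity_mul ν hf₀ hr]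
  refine withDensity_mono (hfg.mono fun x hx => ?_)
  rcases eq_or_ne (f₀ x) 0 with h0 | h0
  · simp [h0]
  · calc f₀ x * r x ≤ r x * f x := by rw [mul_comm]; gcongr; exact hf₀f x
      _ ≤ g x := hx h0

theorem withDensity_eq_withDensity_withDensity {ν : Measure X} {f g r : X → ℝ≥0∞}
    [SFinite ν] (hr : Measurable r)
    (hfg : ∀ᵐ x ∂ν.withDensity f, r x * f x = g x)
    (hgf : ∀ᵐ x ∂ν.withDensity g, r x * f x = g x ∧ r x ≠ 0 ∧ r x ≠ ∞) :
    ν.withDensity g = (ν.withDensity f).withDensity r := by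
  refine le_antisymm ?_ (withDensity_withDensity_le hr (hfg.mono fun x hx => hx.le))
  have hinv : (ν.withDensity g).withDensity (fun x => (r x)⁻¹) ≤ ν.withDensity f :=
    withDensity_withDensity_le hr.inv <| hgf.mono fun x ⟨hx, h0, htop⟩ => by
      rw [← hx, ENNReal.inv_mul_cancel_left h0 htop]
  calc ν.withDensity g
      = ((ν.withDensity g).withDensity fun x => (r x)⁻¹).withDensity fun x => (r x)⁻¹⁻¹ :=
        (withDensity_inv_same hr.inv (hgf.mono fun x hx => ENNReal.inv_ne_zero.2 hx.2.2)
          (hgf.mono fun x hx => ENNReal.inv_ne_top.2 hx.2.1)).symm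
    _ ≤ (ν.withDensity f).withDensity r := by
        simpa only [inv_inv] using withDensity_mono_measure hinv _

theorem withDensity_eq_of_ae_eq {ν : Measure X} [SFinite ν] {f g : X → ℝ≥0∞}
    [IsProbabilityMeasure (ν.withDensity f)] [IsProbabilityMeasure (ν.withDensity g)]
    (hfg : ∀ᵐ x ∂ν.withDensity f, f x = g x) : ν.withDensity f = ν.withDensity g :=
  Measure.eq_of_le_of_isProbabilityMeasure <| by
    simpa using withDensity_withDensity_le (r := 1) measurable_one
      (hfg.mono fun x hx => by simp [hx])

end MeasureTheory

theorem AEMeasurable.of_comp_of_injOn {X : Type*} [MeasurableSpace X] {κ : Measure X}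
    {S : Set ℝ} (hS : IsOpen S) {F : ℝ → ℝ} (hFm : Measurable fun a : S => F a)
    (hFi : InjOn F S) {s : X → ℝ} (hs : ∀ᵐ x ∂κ, s x ∈ S)
    (hFs : AEMeasurable (fun x => F (s x)) κ) : AEMeasurable s κ := by
  rcases S.eq_empty_or_nonempty with rfl | ⟨a, ha⟩
  · obtain rfl : κ = 0 := by simpa using hs
    exact aemeasurable_zero_measure
  have : PolishSpace S := hS.polishSpace
  have hF : MeasurableEmbedding fun a : S => F a :=
    hFm.measurableEmbedding fun a b h => Subtype.ext (hFi a.2 b.2 h)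
  obtain ⟨G, hG, hGF⟩ := hF.exists_measurable_extend measurable_subtype_coe fun _ => ⟨(⟨a, ha⟩ : S)⟩
  refine (hG.comp_aemeasurable hFs).congr (hs.mono fun x hx => ?_)
  simpa using congrFun hGF ⟨s x, hx⟩

def tangentLine (φ : ℝ → ℝ) (s t : ℝ) : ℝ := φ s + deriv φ s * (t - s)

@[simp]
theorem tangentLine_self (φ : ℝ → ℝ) (t : ℝ) : tangentLine φ t t = φ t := by
  simp [tangentLine]

theorem measurable_subtype_mul_deriv_sub {φ : ℝ → ℝ} {S : Set ℝ}
    (hd : ∀ x ∈ S, DifferentiableAt ℝ φ x) : Measurable fun a : S => (a : ℝ) * deriv φ a - φ a :=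
  (measurable_subtype_coe.mul ((measurable_deriv φ).comp measurable_subtype_coe)).sub
    (continuousOn_iff_continuous_domRestrict.1 fun x hx =>
      (hd x hx).continuousAt.continuousWithinAt).measurable

namespace StrictConvexOn

variable {S : Set ℝ} {φ : ℝ → ℝ} {s t : ℝ}

theorem tangentLine_lt (hφ : StrictConvexOn ℝ S φ) (hs : s ∈ S) (ht : t ∈ S) (hst : s ≠ t)
    (hd : DifferentiableAt ℝ φ s) : tangentLine φ s t < φ t := by
  rcases hst.lt_or_gt with h | h
  · have := hφ.deriv_lt_slope hs ht h hd
    rw [slope_def_field, lt_div_iff₀ (sub_pos.2 h)] at this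
    simp only [tangentLine]
    linarith
  · have := hφ.slope_lt_deriv ht hs h hd
    rw [slope_def_field, div_lt_iff₀ (sub_pos.2 h)] at this
    simp only [tangentLine]
    linarith

theorem tangentLine_le (hφ : StrictConvexOn ℝ S φ) (hs : s ∈ S) (ht : t ∈ S)
    (hd : DifferentiableAt ℝ φ s) : tangentLine φ s t ≤ φ t := by
  rcases eq_or_ne s t with rfl | hst
  · exact (tangentLine_self φ s).le
  · exact (hφ.tangentLine_lt hs ht hst hd).le

theorem eq_of_tangentLine_eq (hφ : StrictConvexOn ℝ S φ) (hs : s ∈ S) (ht : t ∈ S)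
    (hd : DifferentiableAt ℝ φ s) (h : tangentLine φ s t = φ t) : s = t :=
  not_ne_iff.1 fun hst => (hφ.tangentLine_lt hs ht hst hd).ne h

theorem strictMonoOn_mul_deriv_sub (hφ : StrictConvexOn ℝ (Ioi 0) φ)
    (hd : ∀ x ∈ Ioi (0 : ℝ), DifferentiableAt ℝ φ x) :
    StrictMonoOn (fun a => a * deriv φ a - φ a) (Ioi 0) := by
  intro a ha b hb hab
  have htan := hφ.tangentLine_lt hb ha hab.ne' (hd b hb)
  have hderiv := hφ.strictMonoOn_deriv hd ha hb hab
  have : 0 < a * (deriv φ b - deriv φ a) := mul_pos ha (sub_pos.2 hderiv)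
  simp only [tangentLine] at htan
  nlinarith

variable {X : Type*} [MeasurableSpace X] {μ : Measure X} {u v : X → ℝ}

theorem integral_tangentLine_le (hφ : StrictConvexOn ℝ S φ) (hd : ∀ x ∈ S, DifferentiableAt ℝ φ x)
    (hu : ∀ᵐ x ∂μ, u x ∈ S) (hv : ∀ᵐ x ∂μ, v x ∈ S)
    (hint : Integrable (fun x => tangentLine φ (u x) (v x)) μ)
    (hφv : Integrable (fun x => φ (v x)) μ) :
    ∫ x, tangentLine φ (u x) (v x) ∂μ ≤ ∫ x, φ (v x) ∂μ :=
  integral_mono_ae hint hφv <| by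
    filter_upwards [hu, hv] with x hux hvx using hφ.tangentLine_le hux hvx (hd _ hux)

theorem ae_eq_of_integral_tangentLine_eq (hφ : StrictConvexOn ℝ S φ)
    (hd : ∀ x ∈ S, DifferentiableAt ℝ φ x) (hu : ∀ᵐ x ∂μ, u x ∈ S) (hv : ∀ᵐ x ∂μ, v x ∈ S)
    (hint : Integrable (fun x => tangentLine φ (u x) (v x)) μ)
    (hφv : Integrable (fun x => φ (v x)) μ)
    (h : ∫ x, tangentLine φ (u x) (v x) ∂μ = ∫ x, φ (v x) ∂μ) : ∀ᵐ x ∂μ, u x = v x := by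
  have hle : ∀ᵐ x ∂μ, tangentLine φ (u x) (v x) ≤ φ (v x) := by
    filter_upwards [hu, hv] with x hux hvx using hφ.tangentLine_le hux hvx (hd _ hux)
  filter_upwards [(integral_eq_iff_of_ae_le hint hφv hle).1 h, hu, hv] with x hx hux hvx
  exact hφ.eq_of_tangentLine_eq hux hvx (hd _ hux) hx

theorem aemeasurable_of_aemeasurable_deriv_comp (hφ : StrictConvexOn ℝ (Ioi 0) φ)
    (hd : ∀ x ∈ Ioi (0 : ℝ), DifferentiableAt ℝ φ x) (hu : ∀ᵐ x ∂μ, u x ∈ Ioi 0)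
    (h : AEMeasurable (fun x => deriv φ (u x)) μ) : AEMeasurable u μ :=
  h.of_comp_of_injOn isOpen_Ioi ((measurable_deriv φ).comp measurable_subtype_coe)
    (hφ.strictMonoOn_deriv hd).injOn hu

theorem aemeasurable_of_aemeasurable_mul_deriv_sub_comp (hφ : StrictConvexOn ℝ (Ioi 0) φ)
    (hd : ∀ x ∈ Ioi (0 : ℝ), DifferentiableAt ℝ φ x) (hu : ∀ᵐ x ∂μ, u x ∈ Ioi 0)
    (h : AEMeasurable (fun x => u x * deriv φ (u x) - φ (u x)) μ) : AEMeasurable u μ :=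
  h.of_comp_of_injOn isOpen_Ioi (measurable_subtype_mul_deriv_sub hd)
    (hφ.strictMonoOn_mul_deriv_sub hd).injOn hu

end StrictConvexOn

theorem ENNReal.coe_mul_ofReal_of_eq_div {r : ℝ≥0} {a b : ℝ} (hb : 0 < b) (hr : (r : ℝ) = a / b) :
    (r : ℝ≥0∞) * ENNReal.ofReal b = ENNReal.ofReal a := by
  rw [← ENNReal.ofReal_coe_nnreal, ← ENNReal.ofReal_mul r.coe_nonneg, hr,
    div_mul_cancel₀ _ hb.ne']

section DensityModel

variable {X : Type*} [MeasurableSpace X] {lam μ ν : Measure X} [SFinite lam]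

theorem ae_pos_of_eq_withDensity_ofReal {q q' : X → ℝ}
    (hμ : μ = lam.withDensity fun x => ENNReal.ofReal (q x))
    (hsupp : {x | 0 < q' x} = {x | 0 < q x}) : ∀ᵐ x ∂μ, 0 < q' x := by
  subst hμ
  filter_upwards [ae_withDensity_ne_zero lam _] with x hx
  exact (Set.ext_iff.1 hsupp x).2 (ENNReal.ofReal_pos.1 (pos_iff_ne_zero.2 hx))

theorem eq_of_ae_eq_of_eq_withDensity_ofReal {q q' : X → ℝ} [IsProbabilityMeasure μ]
    [IsProbabilityMeasure ν] (hμ : μ = lam.withDensity fun x => ENNReal.ofReal (q x))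
    (hν : ν = lam.withDensity fun x => ENNReal.ofReal (q' x)) (h : ∀ᵐ x ∂μ, q x = q' x) :
    μ = ν := by
  subst hμ hν
  exact withDensity_eq_of_ae_eq (h.mono fun x hx => by rw [hx])

theorem exists_eq_withDensity_of_aemeasurable_div {q₁ q₂ : X → ℝ}
    (h₁ : μ = lam.withDensity fun x => ENNReal.ofReal (q₁ x))
    (h₂ : ν = lam.withDensity fun x => ENNReal.ofReal (q₂ x))
    (hpos₁ : ∀ᵐ x ∂μ, 0 < q₁ x ∧ 0 < q₂ x) (hpos₂ : ∀ᵐ x ∂ν, 0 < q₁ x ∧ 0 < q₂ x)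
    (hm₁ : AEMeasurable (fun x => q₁ x / q₂ x) μ) (hm₂ : AEMeasurable (fun x => q₁ x / q₂ x) ν) :
    ∃ r : X → ℝ≥0, Measurable r ∧ (∀ᵐ x ∂ν, (r x : ℝ) = q₁ x / q₂ x) ∧
      μ = ν.withDensity fun x => r x := by
  have hm := hm₁.add_measure hm₂
  have hr : ∀ᵐ x ∂(μ + ν), ((hm.mk _ x).toNNReal : ℝ) = q₁ x / q₂ x := by
    filter_upwards [hm.ae_eq_mk, ae_add_measure_iff.2 ⟨hpos₁, hpos₂⟩] with x hx hpos
    rw [← hx, Real.coe_toNNReal _ (div_pos hpos.1 hpos.2).le]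
  obtain ⟨hr₁, hr₂⟩ := ae_add_measure_iff.1 hr
  refine ⟨fun x => (hm.mk _ x).toNNReal, hm.measurable_mk.real_toNNReal, hr₂, ?_⟩
  subst h₁ h₂
  refine withDensity_eq_withDensity_withDensity hm.measurable_mk.real_toNNReal.coe_nnreal_ennreal
    ?_ ?_
  · filter_upwards [hr₂, hpos₂] with x hx hpos using ENNReal.coe_mul_ofReal_of_eq_div hpos.2 hx
  · filter_upwards [hr₁, hpos₁] with x hx hpos
    refine ⟨ENNReal.coe_mul_ofReal_of_eq_div hpos.2 hx, ?_, ENNReal.coe_ne_top⟩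
    exact ENNReal.coe_ne_zero.2 (NNReal.coe_pos.1 (hx ▸ div_pos hpos.1 hpos.2)).ne'

end DensityModel

section ParametricModel

variable {X : Type*} [MeasurableSpace X] {d : ℕ} {φ : ℝ → ℝ}
  {p : EuclideanSpace ℝ (Fin d) → X → ℝ} {P : EuclideanSpace ℝ (Fin d) → Measure X}
  {θ α θT : EuclideanSpace ℝ (Fin d)}

theorem integrable_mul_deriv_sub_of_integrable_hFun {μ : Measure X} [IsFiniteMeasure μ]
    (h : Integrable (hFun φ p P θ α) μ) :
    Integrable (fun x => p θ x / p α x * deriv φ (p θ x / p α x) - φ (p θ x / p α x)) μ :=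
  ((integrable_const (∫ y, deriv φ (p θ y / p α y) ∂P θ)).sub h).congr
    (ae_of_all _ fun x => by simp [hFun])

theorem integral_hFun_eq_integral_tangentLine [IsProbabilityMeasure (P θT)] {r : X → ℝ≥0}
    (hr : Measurable r) (hrt : ∀ᵐ x ∂P θT, (r x : ℝ) = p θ x / p θT x)
    (hchange : P θ = (P θT).withDensity fun x => r x)
    (hf : Integrable (fun x => deriv φ (p θ x / p α x)) (P θ))
    (hh : Integrable (hFun φ p P θ α) (P θT)) :
    Integrable (fun x => tangentLine φ (p θ x / p α x) (p θ x / p θT x)) (P θT) ∧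
      ∫ x, hFun φ p P θ α x ∂P θT =
        ∫ x, tangentLine φ (p θ x / p α x) (p θ x / p θT x) ∂P θT := by
  have hg := integrable_mul_deriv_sub_of_integrable_hFun hh
  have hsmul : ∀ᵐ x ∂P θT, r x • deriv φ (p θ x / p α x) =
      p θ x / p θT x * deriv φ (p θ x / p α x) :=
    hrt.mono fun x hx => by rw [NNReal.smul_def, smul_eq_mul, hx]
  have htf : Integrable (fun x => p θ x / p θT x * deriv φ (p θ x / p α x)) (P θT) :=
    ((integrable_withDensity_iff_integrable_smul hr).1 (hchange ▸ hf)).congr hsmul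
  have hc : ∫ x, deriv φ (p θ x / p α x) ∂P θ =
      ∫ x, p θ x / p θT x * deriv φ (p θ x / p α x) ∂P θT := by
    rw [hchange, integral_withDensity_eq_integral_smul hr]
    exact integral_congr_ae hsmul
  have htan : (fun x => tangentLine φ (p θ x / p α x) (p θ x / p θT x)) = fun x =>
      p θ x / p θT x * deriv φ (p θ x / p α x) -
        (p θ x / p α x * deriv φ (p θ x / p α x) - φ (p θ x / p α x)) := by
    funext x
    simp only [tangentLine]
    ring
  refine ⟨htan ▸ htf.sub hg, ?_⟩
  rw [htan, integral_sub htf hg, ← hc]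
  simp only [hFun]
  rw [integral_sub (integrable_const _) hg]
  simp

end ParametricModel

theorem dual_representation_parametric_general
    {X : Type*} [MeasurableSpace X] {d : ℕ}
    (lam : Measure X) [SigmaFinite lam]
    (Θ : Set (EuclideanSpace ℝ (Fin d)))
    (p : EuclideanSpace ℝ (Fin d) → X → ℝ)
    (P : EuclideanSpace ℝ (Fin d) → Measure X)
    -- the parametric model: densities w.r.t. λ, probability measures,
    -- identifiable, with common support
    (hP_dens : ∀ θ ∈ Θ, P θ = lam.withDensity (fun x => ENNReal.ofReal (p θ x)))
    (hP_prob : ∀ θ ∈ Θ, IsProbabilityMeasure (P θ))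
    (hident : ∀ θ₁ ∈ Θ, ∀ θ₂ ∈ Θ, P θ₁ = P θ₂ → θ₁ = θ₂)
    (hsupp : ∀ θ₁ ∈ Θ, ∀ θ₂ ∈ Θ, {x | 0 < p θ₁ x} = {x | 0 < p θ₂ x})
    -- φ : strictly convex, nonnegative, φ(1)=0, differentiable, essentially smooth
    (φ : ℝ → ℝ)
    (hφ_conv : StrictConvexOn ℝ (Ioi 0) φ)
    (hφ_diff : ∀ x ∈ Ioi (0:ℝ), DifferentiableAt ℝ φ x)
    -- the integrability condition ∫ |φ'(p_θ/p_α)| dP_θ < ∞ for all θ, α ∈ Θ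
    (hcond : ∀ θ ∈ Θ, ∀ α ∈ Θ, Integrable (fun x => deriv φ (p θ x / p α x)) (P θ))
    -- the parameters
    (θT : EuclideanSpace ℝ (Fin d)) (hθT : θT ∈ Θ)
    (θ : EuclideanSpace ℝ (Fin d)) (hθ : θ ∈ Θ)
    -- D_φ(θ,θ_T) is finite and the functions h(θ,α) are P_{θ_T}-integrable
    (hD_int : Integrable (fun x => φ (p θ x / p θT x)) (P θT))
    (hh_int : ∀ α ∈ Θ, Integrable (hFun φ p P θ α) (P θT)) :
    -- D_φ(θ,θ_T) = P_{θ_T} h(θ,θ_T) …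
    (∫ x, φ (p θ x / p θT x) ∂(P θT)) = (∫ x, hFun φ p P θ θT x ∂(P θT)) ∧
    -- … which is the supremum of α ↦ P_{θ_T} h(θ,α) over Θ, attained at α = θ_T …
    (∀ α ∈ Θ, (∫ x, hFun φ p P θ α x ∂(P θT)) ≤ (∫ x, hFun φ p P θ θT x ∂(P θT))) ∧
    -- … and the maximizer is unique
    (∀ α ∈ Θ, (∫ x, hFun φ p P θ α x ∂(P θT)) = (∫ x, hFun φ p P θ θT x ∂(P θT)) →
      α = θT) := by
  have := hP_prob θT hθT
  have hpos : ∀ β ∈ Θ, ∀ γ ∈ Θ, ∀ᵐ x ∂P β, 0 < p γ x := fun β hβ γ hγ =>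
    ae_pos_of_eq_withDensity_ofReal (hP_dens β hβ) (hsupp γ hγ β hβ)
  have hratio : ∀ β ∈ Θ, ∀ γ ∈ Θ, ∀ᵐ x ∂P β, p θ x / p γ x ∈ Ioi 0 := fun β hβ γ hγ => by
    filter_upwards [hpos β hβ θ hθ, hpos β hβ γ hγ] with x h₁ h₂ using div_pos h₁ h₂
  obtain ⟨r, hr, hrt, hchange⟩ := exists_eq_withDensity_of_aemeasurable_div
    (hP_dens θ hθ) (hP_dens θT hθT) ((hpos θ hθ θ hθ).and (hpos θ hθ θT hθT))
    ((hpos θT hθT θ hθ).and (hpos θT hθT θT hθT))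
    (hφ_conv.aemeasurable_of_aemeasurable_deriv_comp hφ_diff (hratio θ hθ θT hθT)
      (hcond θ hθ θT hθT).aemeasurable)
    (hφ_conv.aemeasurable_of_aemeasurable_mul_deriv_sub_comp hφ_diff (hratio θT hθT θT hθT)
      (integrable_mul_deriv_sub_of_integrable_hFun (hh_int θT hθT)).aemeasurable)
  have key := fun α hα =>
    integral_hFun_eq_integral_tangentLine hr hrt hchange (hcond θ hθ α hα) (hh_int α hα)
  have hD : ∫ x, φ (p θ x / p θT x) ∂P θT = ∫ x, hFun φ p P θ θT x ∂P θT := by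
    rw [(key θT hθT).2]
    simp only [tangentLine_self]
  refine ⟨hD, fun α hα => ?_, fun α hα heq => ?_⟩
  · rw [(key α hα).2, ← hD]
    exact hφ_conv.integral_tangentLine_le hφ_diff (hratio θT hθT α hα) (hratio θT hθT θT hθT)
      (key α hα).1 hD_int
  · rw [(key α hα).2, ← hD] at heq
    have := hP_prob α hα
    refine hident α hα θT hθT
      (eq_of_ae_eq_of_eq_withDensity_ofReal (hP_dens θT hθT) (hP_dens α hα) ?_).symm
    filter_upwards [hφ_conv.ae_eq_of_integral_tangentLine_eq hφ_diff (hratio θT hθT α hα)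
      (hratio θT hθT θT hθT) (key α hα).1 hD_int heq, hpos θT hθT θ hθ] with x hst hθx
    rw [← div_div_cancel₀ hθx.ne' (b := p θT x), ← hst, div_div_cancel₀ hθx.ne']

theorem dual_representation_parametric
    {X : Type*} [MeasurableSpace X] {d : ℕ}
    (lam : Measure X) [SigmaFinite lam]
    (Θ : Set (EuclideanSpace ℝ (Fin d)))
    (p : EuclideanSpace ℝ (Fin d) → X → ℝ)
    (P : EuclideanSpace ℝ (Fin d) → Measure X)
    -- the parametric model: densities w.r.t. λ, probability measures,
    -- identifiable, with common support
    (hp_nonneg : ∀ θ ∈ Θ, ∀ x, 0 ≤ p θ x)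
    (hP_dens : ∀ θ ∈ Θ, P θ = lam.withDensity (fun x => ENNReal.ofReal (p θ x)))
    (hP_prob : ∀ θ ∈ Θ, IsProbabilityMeasure (P θ))
    (hident : ∀ θ₁ ∈ Θ, ∀ θ₂ ∈ Θ, P θ₁ = P θ₂ → θ₁ = θ₂)
    (hsupp : ∀ θ₁ ∈ Θ, ∀ θ₂ ∈ Θ, {x | 0 < p θ₁ x} = {x | 0 < p θ₂ x})
    -- φ : strictly convex, nonnegative, φ(1)=0, differentiable, essentially smooth
    (φ : ℝ → ℝ)
    (hφ_conv : StrictConvexOn ℝ (Ioi 0) φ)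
    (hφ_nonneg : ∀ x ∈ Ioi (0:ℝ), 0 ≤ φ x)
    (hφ_one : φ 1 = 0)
    (hφ_diff : ∀ x ∈ Ioi (0:ℝ), DifferentiableAt ℝ φ x)
    (hφ_es : Tendsto (deriv φ) (𝓝[>] (0:ℝ)) atBot)
    -- the integrability condition ∫ |φ'(p_θ/p_α)| dP_θ < ∞ for all θ, α ∈ Θ
    (hcond : ∀ θ ∈ Θ, ∀ α ∈ Θ, Integrable (fun x => deriv φ (p θ x / p α x)) (P θ))
    -- the parameters
    (θT : EuclideanSpace ℝ (Fin d)) (hθT : θT ∈ Θ)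
    (θ : EuclideanSpace ℝ (Fin d)) (hθ : θ ∈ Θ)
    -- D_φ(θ,θ_T) is finite and the functions h(θ,α) are P_{θ_T}-integrable
    (hD_int : Integrable (fun x => φ (p θ x / p θT x)) (P θT))
    (hh_int : ∀ α ∈ Θ, Integrable (hFun φ p P θ α) (P θT)) :
    -- D_φ(θ,θ_T) = P_{θ_T} h(θ,θ_T) …
    (∫ x, φ (p θ x / p θT x) ∂(P θT)) = (∫ x, hFun φ p P θ θT x ∂(P θT)) ∧
    -- … which is the supremum of α ↦ P_{θ_T} h(θ,α) over Θ, attained at α = θ_T …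
    (∀ α ∈ Θ, (∫ x, hFun φ p P θ α x ∂(P θT)) ≤ (∫ x, hFun φ p P θ θT x ∂(P θT))) ∧
    -- … and the maximizer is unique
    (∀ α ∈ Θ, (∫ x, hFun φ p P θ α x ∂(P θT)) = (∫ x, hFun φ p P θ θT x ∂(P θT)) →
      α = θT) :=
  dual_representation_parametric_general lam Θ p P hP_dens hP_prob hident hsupp φ hφ_conv hφ_diff
    hcond θT hθT θ hθ hD_int hh_int
end
end

section
/- Assume (c.4) the estimates θ̂_φ := argmin_{θ∈Θ} sup_{α∈Θ} P_n h(θ,α) and α̂_φ(θ̂_φ) exist; (c.5) sup_{θ,α∈Θ} |P_n h(θ,α) − P_{θ_T} h(θ,α)| → 0 in probability, together with (c.5.a): for any ε>0 there is η>0 such that for every α ∈ Θ with ‖α−θ_T‖>ε and every θ∈Θ, P_{θ_T}h(θ,α) < P_{θ_T}h(θ,θ_T) − η, and (c.5.b): there is a neighborhood N(θ_T) of θ_T such that for any ε>0 there is η>0 with P_{θ_T}h(θ_T,α) < P_{θ_T}h(θ,α) − η for all α ∈ N(θ_T) and all θ∈Θ with ‖θ−θ_T‖>ε; and (c.6) there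 exist a neighborhood N(θ_T) of θ_T and a positive function H with P_{θ_T}H < ∞ dominating |h(θ_T,α,·)| P_{θ_T}-a.s. for all α ∈ N(θ_T). Then (1) sup_{θ∈Θ} ‖α̂_φ(θ) − θ_T‖ → 0 in probability, and (2) θ̂_φ → θ_T in probability. -/
/- STATEMENT 14 (Proposition 3.2): assume
(c.4) the estimates θ̂_φ := argmin_{θ∈Θ} sup_{α∈Θ} P_n h(θ,α) and α̂_φ(θ) exist;
(c.5) sup_{θ,α∈Θ} |P_n h(θ,α) − P_{θ_T} h(θ,α)| → 0 in probability, together with the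
well-separation conditions (c.5.a) and (c.5.b);
(c.6) on a neighborhood of θ_T, |h(θ_T,α,·)| is dominated P_{θ_T}-a.s. by a positive
P_{θ_T}-integrable function H.
Then (1) sup_{θ∈Θ} ‖α̂_φ(θ) − θ_T‖ → 0 in probability and (2) θ̂_φ → θ_T in probability. -/

open MeasureTheory ProbabilityTheory Filter Topology Set
open scoped ENNReal NNReal

noncomputable section

/-!
If the limit criterion `M` has a well-separated maximiser `x₀` and the empirical criterion
`Mₙ` is uniformly `η/2`-close to it, then a point `x` with `Mₙ x₀ ≤ Mₙ x` cannot be far from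
`x₀`: otherwise `M x < M x₀ - η` would contradict the closeness. Applied to `α ↦ P h(θ,α)`
for each `θ` (condition (c.5.a)) this gives (1). For (2) the same argument is applied to the
minimisation of `θ ↦ P h(θ, α̂(θ_T))`, which is well separated by (c.5.b) as soon as
`α̂(θ_T)` lies in the neighbourhood `N(θ_T)`, an event whose probability tends to one by (1).
-/

section WellSeparated

variable {E : Type*} [SeminormedAddCommGroup E]

theorem norm_sub_le_of_le_of_abs_sub_lt {f g : E → ℝ} {x x₀ : E} {ε η : ℝ}
    (hsep : ε < ‖x - x₀‖ → f x < f x₀ - η) (hle : g x₀ ≤ g x)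
    (hx : |g x - f x| < η / 2) (hx₀ : |g x₀ - f x₀| < η / 2) : ‖x - x₀‖ ≤ ε := by
  by_contra! hfar
  have := hsep hfar
  rw [abs_lt] at hx hx₀
  linarith [hx.1, hx₀.2]

theorem norm_sub_le_of_ge_of_abs_sub_lt {f g : E → ℝ} {x x₀ : E} {ε η : ℝ}
    (hsep : ε < ‖x - x₀‖ → f x₀ < f x - η) (hle : g x ≤ g x₀)
    (hx : |g x - f x| < η / 2) (hx₀ : |g x₀ - f x₀| < η / 2) : ‖x - x₀‖ ≤ ε :=
  norm_sub_le_of_le_of_abs_sub_lt (f := fun y => -f y) (g := fun y => -g y) (η := η)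
    (fun h => by linarith [hsep h]) (neg_le_neg hle)
    (by rwa [neg_sub_neg, abs_sub_comm]) (by rwa [neg_sub_neg, abs_sub_comm])

end WellSeparated

section Probability

variable {Ω E : Type*} [MeasurableSpace Ω] {μ : Measure Ω}

theorem tendsto_measure_of_subset_union {ι : Type*} {l : Filter ι} {A B C : ι → Set Ω}
    (hABC : ∀ i, A i ⊆ B i ∪ C i) (hB : Tendsto (fun i => μ (B i)) l (𝓝 0))
    (hC : Tendsto (fun i => μ (C i)) l (𝓝 0)) : Tendsto (fun i => μ (A i)) l (𝓝 0) := by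
  refine tendsto_nhds_bot_mono' (by simpa using hB.add hC) fun i => ?_
  exact (measure_mono (hABC i)).trans (measure_union_le _ _)

variable [SeminormedAddCommGroup E] {Θ : Set E} {θT : E} {M : E → E → ℝ}
  {Mn : ℕ → Ω → E → E → ℝ} {ahat : ℕ → Ω → E → E}

theorem tendsto_measure_exists_norm_argmax_sub_ge (hθT : θT ∈ Θ)
    (hahat_mem : ∀ n ω, ∀ θ ∈ Θ, ahat n ω θ ∈ Θ)
    (hahat_max : ∀ n ω, ∀ θ ∈ Θ, IsMaxOn (Mn n ω θ) Θ (ahat n ω θ))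
    (hunif : ∀ δ > (0:ℝ), Tendsto
      (fun n => μ {ω | ∃ θ ∈ Θ, ∃ α ∈ Θ, δ ≤ |Mn n ω θ α - M θ α|}) atTop (𝓝 0))
    (hsep : ∀ ε > (0:ℝ), ∃ η > (0:ℝ), ∀ α ∈ Θ, ε < ‖α - θT‖ → ∀ θ ∈ Θ,
      M θ α < M θ θT - η) {ε : ℝ} (hε : 0 < ε) :
    Tendsto (fun n => μ {ω | ∃ θ ∈ Θ, ε ≤ ‖ahat n ω θ - θT‖}) atTop (𝓝 0) := by
  obtain ⟨η, hη, hsepη⟩ := hsep (ε / 2) (by linarith)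
  refine tendsto_nhds_bot_mono' (hunif (η / 2) (by linarith))
    fun n => measure_mono fun ω ⟨θ, hθ, hfar⟩ => ?_
  by_contra hdev
  simp only [mem_ofPred_eq, not_exists, not_le, not_and] at hdev
  have hα := hahat_mem n ω θ hθ
  have hclose : ‖ahat n ω θ - θT‖ ≤ ε / 2 :=
    norm_sub_le_of_le_of_abs_sub_lt (fun h => hsepη _ hα h θ hθ)
      (hahat_max n ω θ hθ hθT) (hdev θ hθ _ hα) (hdev θ hθ θT hθT)
  linarith

variable {that : ℕ → Ω → E}

theorem tendstoInMeasure_argmin_of_saddle (hθT : θT ∈ Θ)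
    (hahat_mem : ∀ n ω, ∀ θ ∈ Θ, ahat n ω θ ∈ Θ)
    (hahat_max : ∀ n ω, ∀ θ ∈ Θ, IsMaxOn (Mn n ω θ) Θ (ahat n ω θ))
    (hthat_mem : ∀ n ω, that n ω ∈ Θ)
    (hthat_min : ∀ n ω, ∀ θ ∈ Θ,
      Mn n ω (that n ω) (ahat n ω (that n ω)) ≤ Mn n ω θ (ahat n ω θ))
    (hunif : ∀ δ > (0:ℝ), Tendsto
      (fun n => μ {ω | ∃ θ ∈ Θ, ∃ α ∈ Θ, δ ≤ |Mn n ω θ α - M θ α|}) atTop (𝓝 0))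
    (hahat : ∀ δ > (0:ℝ), Tendsto
      (fun n => μ {ω | ∃ θ ∈ Θ, δ ≤ ‖ahat n ω θ - θT‖}) atTop (𝓝 0))
    (hsep : ∃ N ∈ 𝓝 θT, ∀ ε > (0:ℝ), ∃ η > (0:ℝ), ∀ α ∈ N, ∀ θ ∈ Θ, ε < ‖θ - θT‖ →
      M θT α < M θ α - η) :
    TendstoInMeasure μ that atTop (fun _ => θT) := by
  rw [tendstoInMeasure_iff_norm]
  intro ε hε
  obtain ⟨N, hN, hsepN⟩ := hsep
  obtain ⟨η, hη, hsepη⟩ := hsepN (ε / 2) (by linarith)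
  obtain ⟨δ, hδ, hball⟩ := Metric.mem_nhds_iff.mp hN
  refine tendsto_measure_of_subset_union (fun n ω hω => ?_)
    (hunif (η / 2) (by linarith)) (hahat δ hδ)
  by_contra hgood
  simp only [mem_union, mem_ofPred_eq, not_or, not_exists, not_le, not_and] at hω hgood
  obtain ⟨hdev, hnear⟩ := hgood
  have hθ := hthat_mem n ω
  have hα := hahat_mem n ω θT hθT
  have hαN : ahat n ω θT ∈ N := hball (mem_ball_iff_norm.mpr (hnear θT hθT))
  have hsaddle : Mn n ω (that n ω) (ahat n ω θT) ≤ Mn n ω θT (ahat n ω θT) :=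
    (hahat_max n ω _ hθ hα).trans (hthat_min n ω θT hθT)
  have hclose : ‖that n ω - θT‖ ≤ ε / 2 :=
    norm_sub_le_of_ge_of_abs_sub_lt (f := (M · (ahat n ω θT)))
      (g := (Mn n ω · (ahat n ω θT))) (fun h => hsepη _ hαN _ hθ h) hsaddle
      (hdev _ hθ _ hα) (hdev θT hθT _ hα)
  linarith

end Probability

theorem consistency_of_minimum_dual_divergence_estimator_general
    {X : Type*} [MeasurableSpace X] {d : ℕ}
    (Θ : Set (EuclideanSpace ℝ (Fin d)))
    (p : EuclideanSpace ℝ (Fin d) → X → ℝ)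
    (P : EuclideanSpace ℝ (Fin d) → Measure X)
    (φ : ℝ → ℝ)
    -- the true parameter and the i.i.d. sample
    (θT : EuclideanSpace ℝ (Fin d)) (hθT : θT ∈ Θ)
    {Ω : Type*} [MeasurableSpace Ω] (Pr : Measure Ω)
    (Xs : ℕ → Ω → X)
    -- (c.4) the estimates exist: α̂_φ(θ) maximizes α ↦ P_n h(θ,α) over Θ, and θ̂_φ
    -- minimizes θ ↦ sup_{α∈Θ} P_n h(θ,α) = P_n h(θ, α̂_φ(θ)) over Θ
    (ahat : ℕ → Ω → EuclideanSpace ℝ (Fin d) → EuclideanSpace ℝ (Fin d))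
    (that : ℕ → Ω → EuclideanSpace ℝ (Fin d))
    (hahat_mem : ∀ (n : ℕ) ω, ∀ θ ∈ Θ, ahat n ω θ ∈ Θ)
    (hahat_max : ∀ (n : ℕ) ω, ∀ θ ∈ Θ, IsMaxOn
      (fun α => (n : ℝ)⁻¹ * ∑ i ∈ Finset.range n, hFun φ p P θ α (Xs i ω)) Θ (ahat n ω θ))
    (hthat_mem : ∀ (n : ℕ) ω, that n ω ∈ Θ)
    (hthat_min : ∀ (n : ℕ) ω, ∀ θ ∈ Θ,
      (n : ℝ)⁻¹ * ∑ i ∈ Finset.range n, hFun φ p P (that n ω) (ahat n ω (that n ω)) (Xs i ω)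
        ≤ (n : ℝ)⁻¹ * ∑ i ∈ Finset.range n, hFun φ p P θ (ahat n ω θ) (Xs i ω))
    -- (c.5) uniform (over Θ×Θ) convergence in probability of P_n h to P_{θ_T} h
    (hc5 : ∀ ε > (0:ℝ), Tendsto
      (fun (n : ℕ) => Pr {ω | ∃ θ ∈ Θ, ∃ α ∈ Θ, ε ≤
        |(n : ℝ)⁻¹ * ∑ i ∈ Finset.range n, hFun φ p P θ α (Xs i ω)
          - ∫ x, hFun φ p P θ α x ∂(P θT)|}) atTop (𝓝 0))
    -- (c.5.a)
    (hc5a : ∀ ε > (0:ℝ), ∃ η > (0:ℝ), ∀ α ∈ Θ, ε < ‖α - θT‖ → ∀ θ ∈ Θ,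
      (∫ x, hFun φ p P θ α x ∂(P θT)) < (∫ x, hFun φ p P θ θT x ∂(P θT)) - η)
    -- (c.5.b)
    (hc5b : ∃ N ∈ 𝓝 θT, ∀ ε > (0:ℝ), ∃ η > (0:ℝ), ∀ α ∈ N, ∀ θ ∈ Θ, ε < ‖θ - θT‖ →
      (∫ x, hFun φ p P θT α x ∂(P θT)) < (∫ x, hFun φ p P θ α x ∂(P θT)) - η) :
    -- (1) sup_{θ∈Θ} ‖α̂_φ(θ) − θ_T‖ → 0 in probability
    (∀ ε > (0:ℝ), Tendsto
      (fun (n : ℕ) => Pr {ω | ∃ θ ∈ Θ, ε ≤ ‖ahat n ω θ - θT‖}) atTop (𝓝 0)) ∧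
    -- (2) θ̂_φ → θ_T in probability
    TendstoInMeasure Pr (fun (n : ℕ) ω => that n ω) atTop (fun _ => θT) := by
  have hahat : ∀ ε > (0:ℝ), Tendsto
      (fun (n : ℕ) => Pr {ω | ∃ θ ∈ Θ, ε ≤ ‖ahat n ω θ - θT‖}) atTop (𝓝 0) :=
    fun _ hε => tendsto_measure_exists_norm_argmax_sub_ge hθT hahat_mem hahat_max hc5 hc5a hε
  exact ⟨hahat, tendstoInMeasure_argmin_of_saddle hθT hahat_mem hahat_max hthat_mem hthat_min
    hc5 hahat hc5b⟩

theorem consistency_of_minimum_dual_divergence_estimator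
    {X : Type*} [MeasurableSpace X] {d : ℕ}
    (lam : Measure X) [SigmaFinite lam]
    (Θ : Set (EuclideanSpace ℝ (Fin d)))
    (p : EuclideanSpace ℝ (Fin d) → X → ℝ)
    (P : EuclideanSpace ℝ (Fin d) → Measure X)
    -- the parametric model
    (hp_nonneg : ∀ θ ∈ Θ, ∀ x, 0 ≤ p θ x)
    (hP_dens : ∀ θ ∈ Θ, P θ = lam.withDensity (fun x => ENNReal.ofReal (p θ x)))
    (hP_prob : ∀ θ ∈ Θ, IsProbabilityMeasure (P θ))
    (hident : ∀ θ₁ ∈ Θ, ∀ θ₂ ∈ Θ, P θ₁ = P θ₂ → θ₁ = θ₂)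
    (hsupp : ∀ θ₁ ∈ Θ, ∀ θ₂ ∈ Θ, {x | 0 < p θ₁ x} = {x | 0 < p θ₂ x})
    -- φ : strictly convex, nonnegative, φ(1)=0, differentiable, essentially smooth
    (φ : ℝ → ℝ)
    (hφ_conv : StrictConvexOn ℝ (Ioi 0) φ)
    (hφ_nonneg : ∀ x ∈ Ioi (0:ℝ), 0 ≤ φ x)
    (hφ_one : φ 1 = 0)
    (hφ_diff : ∀ x ∈ Ioi (0:ℝ), DifferentiableAt ℝ φ x)
    (hφ_es : Tendsto (deriv φ) (𝓝[>] (0:ℝ)) atBot)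
    -- the integrability condition ∫ |φ'(p_θ/p_α)| dP_θ < ∞ for all θ, α ∈ Θ
    (hcond : ∀ θ ∈ Θ, ∀ α ∈ Θ, Integrable (fun x => deriv φ (p θ x / p α x)) (P θ))
    -- the true parameter and the i.i.d. sample
    (θT : EuclideanSpace ℝ (Fin d)) (hθT : θT ∈ Θ)
    {Ω : Type*} [MeasurableSpace Ω] (Pr : Measure Ω) [IsProbabilityMeasure Pr]
    (Xs : ℕ → Ω → X) (hXmeas : ∀ i, Measurable (Xs i))
    (hiid : iIndepFun Xs Pr)
    (hlaw : ∀ i, Pr.map (Xs i) = P θT)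
    -- P_{θ_T}-integrability of the functions h(θ,α)
    (hh_int : ∀ θ ∈ Θ, ∀ α ∈ Θ, Integrable (hFun φ p P θ α) (P θT))
    -- (c.4) the estimates exist: α̂_φ(θ) maximizes α ↦ P_n h(θ,α) over Θ, and θ̂_φ
    -- minimizes θ ↦ sup_{α∈Θ} P_n h(θ,α) = P_n h(θ, α̂_φ(θ)) over Θ
    (ahat : ℕ → Ω → EuclideanSpace ℝ (Fin d) → EuclideanSpace ℝ (Fin d))
    (that : ℕ → Ω → EuclideanSpace ℝ (Fin d))
    (hahat_mem : ∀ (n : ℕ) ω, ∀ θ ∈ Θ, ahat n ω θ ∈ Θ)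
    (hahat_max : ∀ (n : ℕ) ω, ∀ θ ∈ Θ, IsMaxOn
      (fun α => (n : ℝ)⁻¹ * ∑ i ∈ Finset.range n, hFun φ p P θ α (Xs i ω)) Θ (ahat n ω θ))
    (hthat_mem : ∀ (n : ℕ) ω, that n ω ∈ Θ)
    (hthat_min : ∀ (n : ℕ) ω, ∀ θ ∈ Θ,
      (n : ℝ)⁻¹ * ∑ i ∈ Finset.range n, hFun φ p P (that n ω) (ahat n ω (that n ω)) (Xs i ω)
        ≤ (n : ℝ)⁻¹ * ∑ i ∈ Finset.range n, hFun φ p P θ (ahat n ω θ) (Xs i ω))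
    -- (c.5) uniform (over Θ×Θ) convergence in probability of P_n h to P_{θ_T} h
    (hc5 : ∀ ε > (0:ℝ), Tendsto
      (fun (n : ℕ) => Pr {ω | ∃ θ ∈ Θ, ∃ α ∈ Θ, ε ≤
        |(n : ℝ)⁻¹ * ∑ i ∈ Finset.range n, hFun φ p P θ α (Xs i ω)
          - ∫ x, hFun φ p P θ α x ∂(P θT)|}) atTop (𝓝 0))
    -- (c.5.a)
    (hc5a : ∀ ε > (0:ℝ), ∃ η > (0:ℝ), ∀ α ∈ Θ, ε < ‖α - θT‖ → ∀ θ ∈ Θ,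
      (∫ x, hFun φ p P θ α x ∂(P θT)) < (∫ x, hFun φ p P θ θT x ∂(P θT)) - η)
    -- (c.5.b)
    (hc5b : ∃ N ∈ 𝓝 θT, ∀ ε > (0:ℝ), ∃ η > (0:ℝ), ∀ α ∈ N, ∀ θ ∈ Θ, ε < ‖θ - θT‖ →
      (∫ x, hFun φ p P θT α x ∂(P θT)) < (∫ x, hFun φ p P θ α x ∂(P θT)) - η)
    -- (c.6)
    (hc6 : ∃ N ∈ 𝓝 θT, ∃ H : X → ℝ, (∀ x, 0 < H x) ∧ Integrable H (P θT) ∧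
      ∀ α ∈ N, ∀ᵐ x ∂(P θT), |hFun φ p P θT α x| ≤ H x) :
    -- (1) sup_{θ∈Θ} ‖α̂_φ(θ) − θ_T‖ → 0 in probability
    (∀ ε > (0:ℝ), Tendsto
      (fun (n : ℕ) => Pr {ω | ∃ θ ∈ Θ, ε ≤ ‖ahat n ω θ - θT‖}) atTop (𝓝 0)) ∧
    -- (2) θ̂_φ → θ_T in probability
    TendstoInMeasure Pr (fun (n : ℕ) ω => that n ω) atTop (fun _ => θT) :=
  consistency_of_minimum_dual_divergence_estimator_general Θ p P φ θT hθT Pr Xs ahat that hahat_mem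
    hahat_max hthat_mem hthat_min hc5 hc5a hc5b
end
end
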